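/- arXiv:1106.4366 — 3 statements merged into one kernel-verified Lean document; each statement's English description precedes it below -/
import Mathlib

section
/- Let α and β be probability measures on the same measurable space with β ≪ α, let φ = dβ/dα, and suppose the relative entropy H = ∫ φ log φ dα is finite. Then for every measurable set A with β(A) > 0, α(A) ≥ β(A) · exp( −(H + 2e^{−1}) / β(A) ). -/
/-!
Jensen's inequality for the convex function `x ↦ x log x`, applied to `φ = dβ/dα` averaged
over `A` with respect to `α`, gives `β(A) log (β(A)/α(A)) ≤ ∫_A φ log φ dα`. Since
`φ log φ ≥ -e⁻¹`, the integral over `Aᶜ` is at least `-e⁻¹`, so the right-hand side is at most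
`H + e⁻¹`. Solving for `α(A)` gives the bound.
-/

open MeasureTheory

theorem Real.neg_exp_neg_one_le_mul_log {x : ℝ} (hx : 0 ≤ x) :
    -Real.exp (-1) ≤ x * Real.log x := by
  rcases hx.eq_or_lt with rfl | hx
  · simp [(Real.exp_pos _).le]
  · -- `log y ≤ y - 1` at `y = e⁻¹ / x`
    have h := Real.log_le_sub_one_of_pos (div_pos (Real.exp_pos (-1)) hx)
    rw [Real.log_div (Real.exp_pos _).ne' hx.ne', Real.log_exp] at h
    have h' := mul_le_mul_of_nonneg_left h hx.le
    rw [mul_sub, mul_sub, mul_div_cancel₀ _ hx.ne'] at h'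
    linarith

theorem Real.mul_exp_neg_div_le_of_mul_log_div_le {a b K : ℝ} (ha : 0 < a) (hb : 0 < b)
    (h : b * Real.log (b / a) ≤ K) : b * Real.exp (-(K / b)) ≤ a := by
  have hlog : Real.log (b / a) ≤ K / b := by rwa [le_div_iff₀ hb, mul_comm]
  have hba : b / a ≤ Real.exp (K / b) :=
    (Real.exp_log (div_pos hb ha)).ge.trans (Real.exp_le_exp.2 hlog)
  rw [Real.exp_neg, ← div_eq_mul_inv, div_le_iff₀ (Real.exp_pos _)]
  rwa [div_le_iff₀ ha, mul_comm] at hba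

section

variable {Ω : Type*} [MeasurableSpace Ω] {μ : Measure Ω}

theorem setIntegral_mul_log_div_le {s : Set Ω} {f : Ω → ℝ} (hs₀ : μ s ≠ 0) (hs : μ s ≠ ⊤)
    (hf₀ : ∀ᵐ x ∂μ.restrict s, 0 ≤ f x) (hf : IntegrableOn f s μ)
    (hfl : IntegrableOn (fun x => f x * Real.log (f x)) s μ) :
    (∫ x in s, f x ∂μ) * Real.log ((∫ x in s, f x ∂μ) / μ.real s)
      ≤ ∫ x in s, f x * Real.log (f x) ∂μ := by
  have hjensen := Real.convexOn_mul_log.map_set_average_le Real.continuous_mul_log.continuousOn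
    isClosed_Ici hs₀ hs hf₀ hf hfl
  have hμs : 0 < μ.real s := ENNReal.toReal_pos hs₀ hs
  simp only [setAverage_eq, smul_eq_mul] at hjensen
  rw [inv_mul_eq_div] at hjensen
  have := mul_le_mul_of_nonneg_left hjensen hμs.le
  rwa [← mul_assoc, mul_div_cancel₀ _ hμs.ne', ← mul_assoc, mul_inv_cancel₀ hμs.ne',
    one_mul] at this

theorem setIntegral_le_integral_add_of_neg_le [IsFiniteMeasure μ] {s : Set Ω} {g : Ω → ℝ}
    {c : ℝ} (hs : MeasurableSet s) (hg : Integrable g μ) (hgc : ∀ x, -c ≤ g x) :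
    ∫ x in s, g x ∂μ ≤ ∫ x, g x ∂μ + c * μ.real sᶜ := by
  have hcompl : -c * μ.real sᶜ ≤ ∫ x in sᶜ, g x ∂μ := by
    simpa [mul_comm] using setIntegral_mono_on (integrableOn_const (measure_ne_top μ sᶜ))
      hg.integrableOn hs.compl fun x _ => hgc x
  linarith [integral_add_compl hs hg]

end

/-- **The entropy lower bound** (Section 3): if `β ≪ α` are probability measures
with `φ = dβ/dα` and finite relative entropy `H = ∫ φ log φ dα`, then for every
measurable `A` with `β(A) > 0`,
`α(A) ≥ β(A) · exp(−(H + 2e⁻¹)/β(A))`. -/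
theorem entropy_lower_bound {Ω : Type*} [MeasurableSpace Ω]
    (α β : Measure Ω) [IsProbabilityMeasure α] [IsProbabilityMeasure β]
    (hac : β ≪ α)
    (hH : Integrable (fun ω => (β.rnDeriv α ω).toReal *
      Real.log (β.rnDeriv α ω).toReal) α)
    (A : Set Ω) (hA : MeasurableSet A) (hβA : 0 < (β A).toReal) :
    (β A).toReal *
        Real.exp (-(((∫ ω, (β.rnDeriv α ω).toReal *
          Real.log (β.rnDeriv α ω).toReal ∂α) + 2 * Real.exp (-1)) / (β A).toReal))
      ≤ (α A).toReal := by
  have hαA : α A ≠ 0 := fun h => by simp [hac h] at hβA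
  have hjensen := setIntegral_mul_log_div_le hαA (measure_ne_top α A)
    (.of_forall fun _ => ENNReal.toReal_nonneg) Measure.integrable_toReal_rnDeriv.integrableOn
    hH.integrableOn
  simp only [Measure.setIntegral_toReal_rnDeriv hac A, measureReal_def] at hjensen
  have hrest := setIntegral_le_integral_add_of_neg_le hA hH
    fun ω => Real.neg_exp_neg_one_le_mul_log ENNReal.toReal_nonneg
  have hcompl : Real.exp (-1) * α.real Aᶜ ≤ Real.exp (-1) :=
    mul_le_of_le_one_right (Real.exp_pos _).le measureReal_le_one
  refine Real.mul_exp_neg_div_le_of_mul_log_div_le (ENNReal.toReal_pos hαA (measure_ne_top α A))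
    hβA ?_
  linarith [Real.exp_pos (-1)]
end

section
/- Let μ be a probability measure on ℝ such that ∫ e^{θx²} dμ(x) < ∞ for every θ > 0. Then: (i) the moment generating function M(θ) = ∫ e^{θx} dμ(x) is finite for all θ ∈ ℝ and satisfies limsup_{|θ|→∞} (1/θ²) log M(θ) = 0; and (ii) the Cramér rate function h(x) = sup_θ [θx − log M(θ)] satisfies liminf_{|x|→∞} h(x)/x² = +∞. -/
open MeasureTheory Filter
open scoped ENNReal

noncomputable section

/-- The unit interval `[0,1]` as a subset of `ℝ`. -/
def unitI : Set ℝ := Set.Icc 0 1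

/-- Moment generating function `M(θ) = ∫ e^{θ x} dμ(x)`. -/
def mgf' (μ : Measure ℝ) (θ : ℝ) : ℝ := ∫ x, Real.exp (θ * x) ∂μ

/-- The Cramér rate function `h(z) = sup_θ (θ z - log M(θ))`, as an extended
nonnegative real (it is always nonnegative, taking `θ = 0`). -/
def cramerRate (μ : Measure ℝ) (z : ℝ) : ℝ≥0∞ :=
  ⨆ θ : ℝ, ENNReal.ofReal (θ * z - Real.log (mgf' μ θ))

/-- The rate function `I(k) = (1/2) ∫∫ h(k(x,y)) dx dy`. -/
def rateI (μ : Measure ℝ) (k : ℝ → ℝ → ℝ) : ℝ≥0∞ :=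
  (1/2) * ∫⁻ x in unitI, ∫⁻ y in unitI, cramerRate μ (k x y)

/-!
Young's inequality `θ x ≤ ε x² + θ² / (4ε)` gives `M(θ) ≤ exp (θ² / (4ε)) · C_ε` with
`C_ε = ∫ exp (ε x²) dμ < ∞`, for every `ε > 0`. Hence `limsup log M(θ) / θ² ≤ 1 / (4ε)` for all `ε`,
while Jensen's `log M(θ) ≥ θ m`, `m = ∫ x dμ`, bounds the ratio below by `m / θ → 0`. Taking `θ = 2εx` in the
supremum defining `h` gives `h(x) ≥ ε x² - log C_ε`, so `h(x) / x² ≥ ε - o(1)` for every `ε`.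
-/

open Real Topology Bornology

lemma comap_abs_atTop_eq_cobounded : comap (fun x : ℝ => |x|) atTop = cobounded ℝ :=
  comap_norm_atTop

lemma tendsto_sq_cobounded_atTop : Tendsto (fun x : ℝ => x ^ 2) (cobounded ℝ) atTop := by
  simpa only [Function.comp_def, Real.norm_eq_abs, sq_abs] using
    (tendsto_pow_atTop two_ne_zero).comp (tendsto_norm_cobounded_atTop (E := ℝ))

lemma exp_mul_le_exp_mul_sq {ε : ℝ} (hε : 0 < ε) (θ x : ℝ) :
    exp (θ * x) ≤ exp (θ ^ 2 / (4 * ε)) * exp (ε * x ^ 2) := by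
  have young : θ * x - ε * x ^ 2 ≤ θ ^ 2 / (4 * ε) := by
    rw [le_div_iff₀ (by positivity)]
    nlinarith [sq_nonneg (2 * ε * x - θ)]
  rw [← exp_add]
  exact exp_le_exp.2 (by linarith)

section

variable {μ : Measure ℝ} {ε : ℝ}

lemma integrable_exp_mul_sq_of_lintegral_ne_top
    (h : ∫⁻ x, ENNReal.ofReal (exp (ε * x ^ 2)) ∂μ ≠ ⊤) :
    Integrable (fun x => exp (ε * x ^ 2)) μ :=
  (lintegral_ofReal_ne_top_iff_integrable (by fun_prop)
    (ae_of_all _ fun _ => (exp_pos _).le)).1 h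

lemma integrable_exp_mul_of_integrable_exp_mul_sq (hε : 0 < ε)
    (h : Integrable (fun x => exp (ε * x ^ 2)) μ) (θ : ℝ) :
    Integrable (fun x => exp (θ * x)) μ := by
  refine (h.const_mul (exp (θ ^ 2 / (4 * ε)))).mono' (by fun_prop) (ae_of_all _ fun x => ?_)
  rw [Real.norm_of_nonneg (exp_pos _).le]
  exact exp_mul_le_exp_mul_sq hε θ x

lemma mgf'_le_of_integrable_exp_mul_sq (hε : 0 < ε)
    (h : Integrable (fun x => exp (ε * x ^ 2)) μ) (θ : ℝ) :
    mgf' μ θ ≤ exp (θ ^ 2 / (4 * ε)) * ∫ x, exp (ε * x ^ 2) ∂μ := by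
  rw [← integral_const_mul]
  exact integral_mono_of_nonneg (ae_of_all _ fun _ => (exp_pos _).le) (h.const_mul _)
    (ae_of_all _ (exp_mul_le_exp_mul_sq hε θ))

variable [IsProbabilityMeasure μ]

lemma log_mgf'_le (hε : 0 < ε) (h : Integrable (fun x => exp (ε * x ^ 2)) μ) (θ : ℝ) :
    log (mgf' μ θ) ≤ θ ^ 2 / (4 * ε) + log (∫ x, exp (ε * x ^ 2) ∂μ) := by
  have hM : 0 < mgf' μ θ :=
    ProbabilityTheory.mgf_pos (X := id) (integrable_exp_mul_of_integrable_exp_mul_sq hε h θ)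
  have hC : 0 < ∫ x, exp (ε * x ^ 2) ∂μ := integral_exp_pos h
  calc log (mgf' μ θ) ≤ log (exp (θ ^ 2 / (4 * ε)) * ∫ x, exp (ε * x ^ 2) ∂μ) :=
        log_le_log hM (mgf'_le_of_integrable_exp_mul_sq hε h θ)
    _ = θ ^ 2 / (4 * ε) + log (∫ x, exp (ε * x ^ 2) ∂μ) := by
        rw [log_mul (exp_ne_zero _) hC.ne', log_exp]

lemma log_mgf'_div_sq_le (hε : 0 < ε) (h : Integrable (fun x => exp (ε * x ^ 2)) μ) (θ : ℝ) :
    log (mgf' μ θ) / θ ^ 2 ≤ 1 / (4 * ε) + log (∫ x, exp (ε * x ^ 2) ∂μ) / θ ^ 2 := by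
  rcases eq_or_ne θ 0 with rfl | hθ
  · simp only [ne_eq, OfNat.ofNat_ne_zero, not_false_eq_true, zero_pow, div_zero, add_zero]
    positivity
  calc log (mgf' μ θ) / θ ^ 2 ≤ (θ ^ 2 / (4 * ε) + log (∫ x, exp (ε * x ^ 2) ∂μ)) / θ ^ 2 := by
        gcongr
        exact log_mgf'_le hε h θ
    _ = 1 / (4 * ε) + log (∫ x, exp (ε * x ^ 2) ∂μ) / θ ^ 2 := by
        field_simp

lemma mul_integral_le_log_mgf' (hexp : ∀ θ, Integrable (fun x => exp (θ * x)) μ) (θ : ℝ) :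
    θ * ∫ x, x ∂μ ≤ log (mgf' μ θ) := by
  have hid : Integrable (fun x : ℝ => x) μ := by
    simpa using ProbabilityTheory.integrable_pow_of_integrable_exp_mul (X := id) one_ne_zero
      (hexp 1) (hexp (-1)) 1
  have hJensen : exp (∫ x, θ * x ∂μ) ≤ mgf' μ θ :=
    convexOn_exp.map_integral_le continuous_exp.continuousOn isClosed_univ
      (ae_of_all _ fun _ => Set.mem_univ _) (hid.const_mul θ) (hexp θ)
  rw [integral_const_mul] at hJensen
  exact (le_log_iff_exp_le (ProbabilityTheory.mgf_pos (X := id) (hexp θ))).2 hJensen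

lemma tendsto_log_mgf'_div_sq (hgauss : ∀ ε > 0, Integrable (fun x => exp (ε * x ^ 2)) μ) :
    Tendsto (fun θ => log (mgf' μ θ) / θ ^ 2) (cobounded ℝ) (𝓝 0) := by
  have hexp := integrable_exp_mul_of_integrable_exp_mul_sq one_pos (hgauss 1 one_pos)
  refine tendsto_order.2 ⟨fun a ha => ?_, fun b hb => ?_⟩
  · have hmean : Tendsto (fun θ : ℝ => (∫ x, x ∂μ) * θ⁻¹) (cobounded ℝ) (𝓝 0) := by
      simpa using tendsto_inv₀_cobounded.const_mul (∫ x, x ∂μ)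
    filter_upwards [hmean.eventually_const_lt ha] with θ hθ
    calc a < (∫ x, x ∂μ) * θ⁻¹ := hθ
      _ = θ * (∫ x, x ∂μ) / θ ^ 2 := by field_simp
      _ ≤ log (mgf' μ θ) / θ ^ 2 := by
        gcongr
        exact mul_integral_le_log_mgf' hexp θ
  · have hε : 0 < 1 / b := by positivity
    have hquarter : 1 / (4 * (1 / b)) < b := by
      field_simp
      linarith
    have hC : Tendsto (fun θ : ℝ => log (∫ x, exp (1 / b * x ^ 2) ∂μ) / θ ^ 2) (cobounded ℝ)
        (𝓝 0) :=
      tendsto_const_nhds.div_atTop tendsto_sq_cobounded_atTop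
    filter_upwards [hC.eventually_lt_const (sub_pos.2 hquarter)] with θ hθ
    linarith [log_mgf'_div_sq_le hε (hgauss _ hε) θ]

lemma sub_log_integral_le_cramerRate (hε : 0 < ε) (h : Integrable (fun x => exp (ε * x ^ 2)) μ)
    (z : ℝ) : ENNReal.ofReal (ε * z ^ 2 - log (∫ x, exp (ε * x ^ 2) ∂μ)) ≤ cramerRate μ z := by
  refine le_iSup_of_le (2 * ε * z) (ENNReal.ofReal_le_ofReal ?_)
  have hsq : (2 * ε * z) ^ 2 / (4 * ε) = ε * z ^ 2 := by
    field_simp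
    ring
  linarith [log_mgf'_le hε h (2 * ε * z)]

lemma tendsto_cramerRate_div_sq (hgauss : ∀ ε > 0, Integrable (fun x => exp (ε * x ^ 2)) μ) :
    Tendsto (fun z => cramerRate μ z / ENNReal.ofReal (z ^ 2)) (cobounded ℝ) (𝓝 ⊤) := by
  refine ENNReal.tendsto_nhds_top fun n => ?_
  have hε : (0 : ℝ) < n + 1 := by positivity
  set C := ∫ x, exp ((n + 1) * x ^ 2) ∂μ
  have hlim : Tendsto (fun z : ℝ => (n + 1) - log C / z ^ 2) (cobounded ℝ) (𝓝 ((n : ℝ) + 1)) := by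
    simpa only [sub_zero] using tendsto_const_nhds.sub
      (tendsto_const_nhds.div_atTop tendsto_sq_cobounded_atTop (a := log C))
  filter_upwards [hlim.eventually_const_lt (lt_add_one (n : ℝ)),
    tendsto_sq_cobounded_atTop.eventually_gt_atTop 0] with z hz hz2
  calc (n : ℝ≥0∞) < ENNReal.ofReal ((n + 1) - log C / z ^ 2) := ENNReal.natCast_lt_ofReal.2 hz
    _ = ENNReal.ofReal ((n + 1) * z ^ 2 - log C) / ENNReal.ofReal (z ^ 2) := by
        rw [← ENNReal.ofReal_div_of_pos hz2]
        rw [sub_div, mul_div_cancel_right₀ _ hz2.ne']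
    _ ≤ cramerRate μ z / ENNReal.ofReal (z ^ 2) := by
        gcongr
        exact sub_log_integral_le_cramerRate hε (hgauss _ hε) z

end

/-- **Properties of the moment generating function and the Cramér rate function**
under the super-Gaussian moment assumption (Section 1): `M(θ)` is finite for all
`θ`, `limsup_{|θ|→∞} (1/θ²) log M(θ) = 0`, and `liminf_{|x|→∞} h(x)/x² = +∞`. -/
theorem mgf_and_cramer_growth (μ : Measure ℝ) [IsProbabilityMeasure μ]
    (hμ : ∀ θ : ℝ, 0 < θ → (∫⁻ x, ENNReal.ofReal (Real.exp (θ * x ^ 2)) ∂μ) < ⊤) :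
    (∀ θ : ℝ, Integrable (fun x => Real.exp (θ * x)) μ) ∧
    (Filter.limsup (fun θ : ℝ => Real.log (mgf' μ θ) / θ ^ 2)
      (Filter.comap (fun θ : ℝ => |θ|) Filter.atTop) = 0) ∧
    (Filter.liminf (fun x : ℝ => cramerRate μ x / ENNReal.ofReal (x ^ 2))
      (Filter.comap (fun x : ℝ => |x|) Filter.atTop) = ⊤) := by
  have hgauss : ∀ ε > 0, Integrable (fun x => Real.exp (ε * x ^ 2)) μ := fun ε hε =>
    integrable_exp_mul_sq_of_lintegral_ne_top (hμ ε hε).ne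
  have hexp := integrable_exp_mul_of_integrable_exp_mul_sq one_pos (hgauss 1 one_pos)
  rw [comap_abs_atTop_eq_cobounded]
  exact ⟨hexp, (tendsto_log_mgf'_div_sq hgauss).limsup_eq,
    (tendsto_cramerRate_div_sq hgauss).liminf_eq⟩

end
end

section
/- Let μ be a probability measure on ℝ such that ∫ e^{θx²} dμ(x) < ∞ for every θ > 0. For ℓ > 0 define the truncation f_ℓ(x) = x for |x| ≤ ℓ, f_ℓ(x) = ℓ for x ≥ ℓ, f_ℓ(x) = −ℓ for x ≤ −ℓ. Let {x_{i,j}}, 1 ≤ i,j ≤ n, be a symmetric random matrix with entries for j ≥ i i.i.d. with law μ. Then: (i) for every θ > 0, limsup_{ℓ→∞} limsup_{n→∞} (1/n²) log 𝔼 exp[ θ Σ_{i,j=1}^n (x_{i,j} − f_ℓ(x_{i,j}))² ] = 0; and (ii) consequently, for every ε > 0, limsup_{ℓ→∞} limsup_{n→∞} (1/n²) log ℙ[ (1/n²) Σ_{i,j=1}^n (x_{i,j} − f_ℓ(x_{i,j}))² ≥ ε ] = −∞. -/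
open MeasureTheory Filter
open scoped ENNReal

noncomputable section

/-- Index set for the upper triangle (including diagonal) of an `n × n` matrix. -/
def UpperTri (n : ℕ) := {p : Fin n × Fin n // p.1 ≤ p.2}

instance (n : ℕ) : Fintype (UpperTri n) := by unfold UpperTri; infer_instance

/-- The symmetric matrix built from i.i.d. entries indexed by the upper triangle. -/
def matrixOf {n : ℕ} (ω : UpperTri n → ℝ) : Fin n → Fin n → ℝ := fun i j =>
  if h : i ≤ j then ω ⟨(i, j), h⟩ else ω ⟨(j, i), (le_total i j).resolve_left h⟩

/-- The joint law of the (upper triangular) i.i.d. entries. -/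
def matMeasure (μ : Measure ℝ) [SigmaFinite μ] (n : ℕ) : Measure (UpperTri n → ℝ) :=
  Measure.pi fun _ => μ

/-- Truncation of a real number at level `ℓ`. -/
def truncAt (ℓ x : ℝ) : ℝ := max (-ℓ) (min ℓ x)

/-!
Each off-diagonal entry occurs twice in `∑ᵢⱼ (xᵢⱼ - f_ℓ(xᵢⱼ))²`, so `exp (θ ∑ᵢⱼ …)` is dominated
by the product over the independent upper-triangular entries of `exp (2θ (x - f_ℓ(x))²)`, and its
expectation is at most `M_ℓ ^ (n²)` with `M_ℓ = ∫ exp (2θ (x - f_ℓ(x))²) dμ ≥ 1`. Since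
`exp (2θ x²)` is integrable, dominated convergence gives `M_ℓ → 1` as `ℓ → ∞`, which is (i).
Chernoff's bound with parameter `θ / ε` then gives `(1/n²) log ℙ[Δ(ℓ) ≥ ε] ≤ log M_ℓ - θ` for
every `θ > 0`, which is (ii).
-/

open scoped Topology
open Real ProbabilityTheory

lemma continuous_sub_truncAt_sq (ℓ : ℝ) : Continuous fun x : ℝ => (x - truncAt ℓ x) ^ 2 := by
  unfold truncAt
  fun_prop

lemma sub_truncAt_sq_le_sq {ℓ : ℝ} (hℓ : 0 ≤ ℓ) (x : ℝ) : (x - truncAt ℓ x) ^ 2 ≤ x ^ 2 := by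
  unfold truncAt
  simp only [max_def, min_def]
  split_ifs <;> nlinarith

lemma truncAt_of_abs_le {ℓ x : ℝ} (h : |x| ≤ ℓ) : truncAt ℓ x = x := by
  rw [truncAt, min_eq_right (abs_le.1 h).2, max_eq_right (abs_le.1 h).1]

section SymmetricMatrix

variable {n : ℕ}

lemma matrixOf_val_fst_val_snd (ω : UpperTri n → ℝ) (p : UpperTri n) :
    matrixOf ω p.1.1 p.1.2 = ω p := by
  rw [matrixOf, dif_pos p.2]
  rfl

lemma matrixOf_comm (ω : UpperTri n → ℝ) (i j : Fin n) : matrixOf ω i j = matrixOf ω j i := by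
  unfold matrixOf
  rcases lt_trichotomy i j with h | rfl | h
  · rw [dif_pos h.le, dif_neg h.not_ge]
  · rfl
  · rw [dif_neg h.not_ge, dif_pos h.le]

lemma measurable_matrixOf_apply (i j : Fin n) :
    Measurable fun ω : UpperTri n → ℝ => matrixOf ω i j := by
  unfold matrixOf
  split_ifs <;> exact measurable_pi_apply _

lemma card_upperTri_le (n : ℕ) : Fintype.card (UpperTri n) ≤ n ^ 2 := by
  simpa [sq] using Fintype.card_le_of_injective (fun p : UpperTri n => p.1) Subtype.val_injective

lemma sum_upperTri {M : Type*} [AddCommMonoid M] (g : Fin n → Fin n → M) :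
    ∑ p : UpperTri n, g p.1.1 p.1.2 = ∑ i, ∑ j, if i ≤ j then g i j else 0 := by
  calc ∑ p : UpperTri n, g p.1.1 p.1.2
      = ∑ q ∈ Finset.univ.filter (fun q : Fin n × Fin n => q.1 ≤ q.2), g q.1 q.2 :=
        (Finset.sum_subtype _ (by simp) (fun q : Fin n × Fin n => g q.1 q.2)).symm
    _ = _ := by rw [Finset.sum_filter, Fintype.sum_prod_type]

lemma sum_sum_matrixOf_le {f : ℝ → ℝ} (hf : ∀ x, 0 ≤ f x) (ω : UpperTri n → ℝ) :
    ∑ i, ∑ j, f (matrixOf ω i j) ≤ 2 * ∑ p, f (ω p) := by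
  have hupper : ∑ p, f (ω p) = ∑ i, ∑ j, if i ≤ j then f (matrixOf ω i j) else 0 := by
    simp only [← sum_upperTri, matrixOf_val_fst_val_snd]
  calc ∑ i, ∑ j, f (matrixOf ω i j)
      ≤ ∑ i, ∑ j, ((if i ≤ j then f (matrixOf ω i j) else 0) +
          if j ≤ i then f (matrixOf ω j i) else 0) := by
        gcongr with i _ j _
        rw [matrixOf_comm ω j i]
        split_ifs with h₁ h₂ h₂
        · linarith [hf (matrixOf ω i j)]
        · rw [add_zero]
        · rw [zero_add]
        · exact absurd (le_total i j) (by tauto)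
    _ = 2 * ∑ p, f (ω p) := by
        simp only [Finset.sum_add_distrib]
        rw [Finset.sum_comm (f := fun i j => if j ≤ i then f (matrixOf ω j i) else 0), ← hupper]
        ring

end SymmetricMatrix

lemma one_le_integral_exp {Ω : Type*} [MeasurableSpace Ω] {P : Measure Ω}
    [IsProbabilityMeasure P] {f : Ω → ℝ} (hf : ∀ ω, 0 ≤ f ω)
    (hint : Integrable (fun ω => exp (f ω)) P) :
    1 ≤ ∫ ω, exp (f ω) ∂P := by
  simpa using integral_mono (integrable_const 1) hint fun ω => one_le_exp (hf ω)

lemma integrable_exp_mul_sq_of_lintegral_lt_top {μ : Measure ℝ} {c : ℝ}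
    (h : ∫⁻ x, ENNReal.ofReal (exp (c * x ^ 2)) ∂μ < ⊤) :
    Integrable (fun x => exp (c * x ^ 2)) μ := by
  refine ⟨by fun_prop, ?_⟩
  rwa [hasFiniteIntegral_iff_ofReal (Eventually.of_forall fun x => (exp_pos _).le)]

section TruncMoment

def truncMoment (μ : Measure ℝ) (c ℓ : ℝ) : ℝ := ∫ x, exp (c * (x - truncAt ℓ x) ^ 2) ∂μ

variable {μ : Measure ℝ} {c : ℝ}

lemma exp_mul_sub_truncAt_sq_le (hc : 0 ≤ c) {ℓ : ℝ} (hℓ : 0 ≤ ℓ) (x : ℝ) :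
    exp (c * (x - truncAt ℓ x) ^ 2) ≤ exp (c * x ^ 2) :=
  exp_le_exp.2 (mul_le_mul_of_nonneg_left (sub_truncAt_sq_le_sq hℓ x) hc)

lemma integrable_exp_mul_sub_truncAt_sq (hc : 0 ≤ c) {ℓ : ℝ} (hℓ : 0 ≤ ℓ)
    (h : Integrable (fun x => exp (c * x ^ 2)) μ) :
    Integrable (fun x => exp (c * (x - truncAt ℓ x) ^ 2)) μ := by
  refine h.mono' (by unfold truncAt; fun_prop) (Eventually.of_forall fun x => ?_)
  rw [norm_of_nonneg (exp_pos _).le]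
  exact exp_mul_sub_truncAt_sq_le hc hℓ x

lemma one_le_truncMoment [IsProbabilityMeasure μ] (hc : 0 ≤ c) {ℓ : ℝ} (hℓ : 0 ≤ ℓ)
    (h : Integrable (fun x => exp (c * x ^ 2)) μ) : 1 ≤ truncMoment μ c ℓ :=
  one_le_integral_exp (fun x => by positivity) (integrable_exp_mul_sub_truncAt_sq hc hℓ h)

lemma tendsto_truncMoment [IsProbabilityMeasure μ] (hc : 0 ≤ c)
    (h : Integrable (fun x => exp (c * x ^ 2)) μ) :
    Tendsto (truncMoment μ c) atTop (𝓝 1) := by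
  have hlim : ∀ x : ℝ, Tendsto (fun ℓ => exp (c * (x - truncAt ℓ x) ^ 2)) atTop (𝓝 1) := by
    intro x
    refine tendsto_const_nhds.congr' ?_
    filter_upwards [eventually_ge_atTop |x|] with ℓ hℓ
    simp [truncAt_of_abs_le hℓ]
  convert tendsto_integral_filter_of_dominated_convergence _
    (Eventually.of_forall fun ℓ => (by unfold truncAt; fun_prop))
    (by
      filter_upwards [eventually_ge_atTop 0] with ℓ hℓ
      refine Eventually.of_forall fun x => ?_
      rw [norm_of_nonneg (exp_pos _).le]
      exact exp_mul_sub_truncAt_sq_le hc hℓ x)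
    h (Eventually.of_forall hlim) <;> simp [truncMoment]

lemma tendsto_log_truncMoment [IsProbabilityMeasure μ] (hc : 0 ≤ c)
    (h : Integrable (fun x => exp (c * x ^ 2)) μ) :
    Tendsto (fun ℓ => log (truncMoment μ c ℓ)) atTop (𝓝 0) := by
  simpa [Function.comp_def] using
    (continuousAt_log one_ne_zero).tendsto.comp (tendsto_truncMoment hc h)

end TruncMoment

instance isProbabilityMeasure_matMeasure (μ : Measure ℝ) [IsProbabilityMeasure μ] (n : ℕ) :
    IsProbabilityMeasure (matMeasure μ n) := by
  unfold matMeasure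
  infer_instance

section TruncDefect

/-- `n² Δ(ℓ)` in the paper's notation. -/
def truncDefect (ℓ : ℝ) {n : ℕ} (ω : UpperTri n → ℝ) : ℝ :=
  ∑ i, ∑ j, (matrixOf ω i j - truncAt ℓ (matrixOf ω i j)) ^ 2

variable {μ : Measure ℝ} {ℓ s : ℝ} {n : ℕ}

lemma truncDefect_nonneg (ω : UpperTri n → ℝ) : 0 ≤ truncDefect ℓ ω := by
  unfold truncDefect
  positivity

lemma measurable_truncDefect : Measurable fun ω : UpperTri n → ℝ => truncDefect ℓ ω :=
  Finset.measurable_sum _ fun i _ => Finset.measurable_sum _ fun j _ =>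
    (continuous_sub_truncAt_sq ℓ).measurable.comp (measurable_matrixOf_apply i j)

lemma exp_mul_truncDefect_le_prod (hs : 0 ≤ s) (ω : UpperTri n → ℝ) :
    exp (s * truncDefect ℓ ω) ≤ ∏ p, exp (2 * s * (ω p - truncAt ℓ (ω p)) ^ 2) := by
  rw [← exp_sum, exp_le_exp]
  calc s * truncDefect ℓ ω ≤ s * (2 * ∑ p, (ω p - truncAt ℓ (ω p)) ^ 2) :=
        mul_le_mul_of_nonneg_left (sum_sum_matrixOf_le (f := fun x => (x - truncAt ℓ x) ^ 2)
          (fun x => sq_nonneg _) ω) hs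
    _ = ∑ p, 2 * s * (ω p - truncAt ℓ (ω p)) ^ 2 := by
        rw [Finset.mul_sum, Finset.mul_sum]
        ring_nf

variable [IsProbabilityMeasure μ]

lemma integrable_exp_mul_truncDefect (hs : 0 ≤ s) (hℓ : 0 ≤ ℓ)
    (h : Integrable (fun x => exp (2 * s * x ^ 2)) μ) :
    Integrable (fun ω => exp (s * truncDefect ℓ ω)) (matMeasure μ n) := by
  refine (Integrable.fintype_prod (μ := fun _ => μ)
    fun _ => integrable_exp_mul_sub_truncAt_sq (by positivity) hℓ h).mono'
    (measurable_truncDefect.const_mul s).exp.aestronglyMeasurable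
    (Eventually.of_forall fun ω => ?_)
  rw [norm_of_nonneg (exp_pos _).le]
  exact exp_mul_truncDefect_le_prod hs ω

lemma integral_exp_mul_truncDefect_le (hs : 0 ≤ s) (hℓ : 0 ≤ ℓ)
    (h : Integrable (fun x => exp (2 * s * x ^ 2)) μ) :
    ∫ ω, exp (s * truncDefect ℓ ω) ∂(matMeasure μ n) ≤
      exp (n ^ 2 * log (truncMoment μ (2 * s) ℓ)) := by
  have hM := one_le_truncMoment (by positivity) hℓ h
  calc ∫ ω, exp (s * truncDefect ℓ ω) ∂(matMeasure μ n)
      ≤ ∫ ω, ∏ p, exp (2 * s * (ω p - truncAt ℓ (ω p)) ^ 2) ∂(matMeasure μ n) :=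
        integral_mono (integrable_exp_mul_truncDefect hs hℓ h)
          (Integrable.fintype_prod fun _ => integrable_exp_mul_sub_truncAt_sq (by positivity) hℓ h)
          (exp_mul_truncDefect_le_prod hs)
    _ = truncMoment μ (2 * s) ℓ ^ Fintype.card (UpperTri n) :=
        integral_fintype_prod_eq_pow (fun x => exp (2 * s * (x - truncAt ℓ x) ^ 2))
    _ ≤ truncMoment μ (2 * s) ℓ ^ n ^ 2 := pow_le_pow_right₀ hM (card_upperTri_le n)
    _ = exp (n ^ 2 * log (truncMoment μ (2 * s) ℓ)) := by
        rw [← exp_log (by linarith : 0 < truncMoment μ (2 * s) ℓ), ← exp_nat_mul, log_exp]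
        push_cast
        ring_nf

end TruncDefect

lemma one_div_mul_log_measure_le_of_integral_exp_le {Ω : Type*} [MeasurableSpace Ω]
    {P : Measure Ω} [IsFiniteMeasure P] {S : Ω → ℝ} {N s ε C : ℝ} (hN : 0 < N) (hs : 0 ≤ s)
    (hint : Integrable (fun ω => exp (s * S ω)) P)
    (hE : ∫ ω, exp (s * S ω) ∂P ≤ exp (N * C)) :
    ((1 / N : ℝ) : EReal) * ENNReal.log (P {ω | ε ≤ 1 / N * S ω}) ≤ ((C - s * ε : ℝ) : EReal) := by
  have hset : {ω | ε ≤ 1 / N * S ω} = {ω | N * ε ≤ S ω} :=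
    Set.ext fun ω => show ε ≤ 1 / N * S ω ↔ N * ε ≤ S ω by
      rw [one_div_mul_eq_div, le_div_iff₀' hN]
  have hP : P.real {ω | N * ε ≤ S ω} ≤ exp (N * (C - s * ε)) :=
    calc P.real {ω | N * ε ≤ S ω} ≤ exp (-s * (N * ε)) * mgf S P s :=
          measure_ge_le_exp_mul_mgf _ hs hint
      _ ≤ exp (-s * (N * ε)) * exp (N * C) := by gcongr; exact hE
      _ = exp (N * (C - s * ε)) := by rw [← exp_add]; ring_nf
  have hlog : ENNReal.log (P {ω | ε ≤ 1 / N * S ω}) ≤ ((N * (C - s * ε) : ℝ) : EReal) := by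
    rw [hset, ← ofReal_measureReal, ← log_exp (N * (C - s * ε)),
      ← ENNReal.log_ofReal_of_pos (exp_pos _)]
    exact ENNReal.log_monotone (ENNReal.ofReal_le_ofReal hP)
  calc ((1 / N : ℝ) : EReal) * ENNReal.log (P {ω | ε ≤ 1 / N * S ω})
      ≤ ((1 / N : ℝ) : EReal) * ((N * (C - s * ε) : ℝ) : EReal) :=
        mul_le_mul_of_nonneg_left hlog (EReal.coe_nonneg.2 (by positivity))
    _ = ((C - s * ε : ℝ) : EReal) := by
        rw [← EReal.coe_mul]
        congr 1
        field_simp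

section IteratedLimsup

variable {α β : Type*} {l : Filter α} {l' : Filter β} [l.NeBot]

lemma limsup_limsup_eq_zero_of_le [l'.NeBot] {a : α → β → ℝ} {C : α → ℝ}
    (hC : Tendsto C l (𝓝 0))
    (h : ∀ᶠ x in l, ∀ᶠ y in l', 0 ≤ a x y ∧ a x y ≤ C x) :
    limsup (fun x => limsup (a x) l') l = 0 := by
  refine (tendsto_of_tendsto_of_tendsto_of_le_of_le' tendsto_const_nhds hC ?_ ?_).limsup_eq
  · filter_upwards [h] with x hx
    exact le_limsup_of_frequently_le (hx.mono fun y hy => hy.1).frequently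
      (isBoundedUnder_of_eventually_le (hx.mono fun y hy => hy.2))
  · filter_upwards [h] with x hx
    exact limsup_le_of_le (isCoboundedUnder_le_of_eventually_le l' (hx.mono fun y hy => hy.1))
      (hx.mono fun y hy => hy.2)

lemma limsup_limsup_eq_bot {b : α → β → EReal}
    (h : ∀ θ > 0, ∃ C : α → ℝ, Tendsto C l (𝓝 0) ∧
      ∀ᶠ x in l, ∀ᶠ y in l', b x y ≤ ((C x - θ : ℝ) : EReal)) :
    limsup (fun x => limsup (b x) l') l = ⊥ := by
  refine (EReal.eq_bot_iff_forall_lt _).2 fun t => ?_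
  obtain ⟨C, hC, hb⟩ := h (|t| + 1) (by positivity)
  have hlim : Tendsto (fun x => ((C x - (|t| + 1) : ℝ) : EReal)) l
      (𝓝 ((-(|t| + 1) : ℝ) : EReal)) := by
    have := (continuous_coe_real_ereal.tendsto _).comp (hC.sub_const (|t| + 1))
    rwa [zero_sub] at this
  calc limsup (fun x => limsup (b x) l') l
      ≤ limsup (fun x => ((C x - (|t| + 1) : ℝ) : EReal)) l :=
        limsup_le_limsup (hb.mono fun x hx => limsup_le_of_le (by isBoundedDefault) hx)
    _ = ((-(|t| + 1) : ℝ) : EReal) := hlim.limsup_eq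
    _ < t := EReal.coe_lt_coe_iff.2 (by linarith [neg_abs_le t])

end IteratedLimsup

/-- **Section 5 (truncation estimates)**: (i) for every `θ > 0`,
`limsup_{ℓ→∞} limsup_{n→∞} (1/n²) log 𝔼 exp[θ Σ_{i,j}(x_{i,j} − f_ℓ(x_{i,j}))²] = 0`,
and (ii) consequently, for every `ε > 0`, the probability that
`(1/n²) Σ_{i,j}(x_{i,j} − f_ℓ(x_{i,j}))² ≥ ε` is superexponentially small at scale
`n²`, uniformly as `ℓ → ∞`. -/
theorem truncation_superexponential_estimate (μ : Measure ℝ) [IsProbabilityMeasure μ]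
    (hμ : ∀ θ : ℝ, 0 < θ → (∫⁻ x, ENNReal.ofReal (Real.exp (θ * x ^ 2)) ∂μ) < ⊤) :
    (∀ θ : ℝ, 0 < θ →
      Filter.limsup (fun ℓ : ℝ =>
        Filter.limsup (fun n : ℕ =>
          (1 / (n : ℝ) ^ 2) * Real.log (∫ ω,
            Real.exp (θ * ∑ i : Fin n, ∑ j : Fin n,
              (matrixOf ω i j - truncAt ℓ (matrixOf ω i j)) ^ 2)
            ∂(matMeasure μ n))) Filter.atTop) Filter.atTop = 0) ∧
    (∀ ε : ℝ, 0 < ε →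
      Filter.limsup (fun ℓ : ℝ =>
        Filter.limsup (fun n : ℕ =>
          ((1 / (n : ℝ) ^ 2 : ℝ) : EReal) *
            ENNReal.log ((matMeasure μ n)
              {ω | ε ≤ (1 / (n : ℝ) ^ 2) * ∑ i : Fin n, ∑ j : Fin n,
                (matrixOf ω i j - truncAt ℓ (matrixOf ω i j)) ^ 2}))
          Filter.atTop) Filter.atTop = ⊥) := by
  have hint (s : ℝ) (hs : 0 < s) : Integrable (fun x => exp (2 * s * x ^ 2)) μ :=
    integrable_exp_mul_sq_of_lintegral_lt_top (hμ _ (by positivity))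
  refine ⟨fun θ hθ => ?_, fun ε hε => ?_⟩
  · refine limsup_limsup_eq_zero_of_le (tendsto_log_truncMoment (by positivity) (hint θ hθ)) ?_
    filter_upwards [eventually_ge_atTop 0] with ℓ hℓ
    filter_upwards [eventually_ge_atTop 1] with n hn
    have hE1 := one_le_integral_exp (fun ω => mul_nonneg hθ.le (truncDefect_nonneg ω))
      (integrable_exp_mul_truncDefect (n := n) hθ.le hℓ (hint θ hθ))
    have hE := integral_exp_mul_truncDefect_le (n := n) hθ.le hℓ (hint θ hθ)
    refine ⟨mul_nonneg (by positivity) (log_nonneg hE1), ?_⟩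
    rw [one_div_mul_eq_div, div_le_iff₀ (by positivity), mul_comm]
    exact (log_le_iff_le_exp (zero_lt_one.trans_le hE1)).2 hE
  · have hs (θ : ℝ) (hθ : 0 < θ) : 0 < θ / ε := div_pos hθ hε
    refine limsup_limsup_eq_bot fun θ hθ =>
      ⟨_, tendsto_log_truncMoment (by positivity) (hint _ (hs θ hθ)), ?_⟩
    filter_upwards [eventually_ge_atTop 0] with ℓ hℓ
    filter_upwards [eventually_ge_atTop 1] with n hn
    have h := one_div_mul_log_measure_le_of_integral_exp_le (ε := ε) (by positivity) (hs θ hθ).le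
      (integrable_exp_mul_truncDefect (hs θ hθ).le hℓ (hint _ (hs θ hθ)))
      (integral_exp_mul_truncDefect_le (n := n) (hs θ hθ).le hℓ (hint _ (hs θ hθ)))
    rwa [div_mul_cancel₀ θ hε.ne'] at h

end
end
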